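/- arXiv:math/9808137 — 2 statements merged into one kernel-verified Lean document; each statement's English description precedes it below -/
import Mathlib

section
/- For arbitrary holomorphic functions Θ₀, Θ₁ on an open set U ⊆ ℂ⁴, the commutator of the two λ-independent tetrad vector fields satisfies the exact identity [∇₀₁′, ∇₁₁′] = E₁·∂/∂y + E₀·∂/∂x on U. In particular [∇₀₁′, ∇₁₁′] = 0 if and only if the pair (Θ₀,Θ₁) satisfies the hyper-Hermitian equation E₀ = E₁ = 0. -/
noncomputable section

/-- Points of `ℂ⁴`, with coordinates `p = (x, y, w, z)`. -/
abbrev V4 : Type := ℂ × ℂ × ℂ × ℂ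

/-- Coordinate directions. -/
def eX : V4 := (1, 0, 0, 0)
def eY : V4 := (0, 1, 0, 0)
def eW : V4 := (0, 0, 1, 0)
def eZ : V4 := (0, 0, 0, 1)

/-- Directional (partial) derivative of `f` along the constant direction `v`. -/
def pd (v : V4) (f : V4 → ℂ) : V4 → ℂ := fun p => fderiv ℂ f p v

/-- The hyper-Hermitian expression
`E_C = ∂²Θ_C/∂x∂w + ∂²Θ_C/∂y∂z + (∂Θ₀/∂x − ∂Θ₁/∂y)·∂²Θ_C/∂x∂y
      + (∂Θ₁/∂x)·∂²Θ_C/∂y² − (∂Θ₀/∂y)·∂²Θ_C/∂x²`. -/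
def hhE (Θ0 Θ1 ΘC : V4 → ℂ) : V4 → ℂ := fun p =>
  pd eX (pd eW ΘC) p + pd eY (pd eZ ΘC) p
    + (pd eX Θ0 p - pd eY Θ1 p) * pd eX (pd eY ΘC) p
    + pd eX Θ1 p * pd eY (pd eY ΘC) p
    - pd eY Θ0 p * pd eX (pd eX ΘC) p

/-- Lie bracket of vector fields on `ℂ⁴`, identified with maps `V4 → V4`:
`[V,W] := (DW)V − (DV)W`. -/
def bracket (Vf Wf : V4 → V4) : V4 → V4 := fun p =>
  fderiv ℂ Wf p (Vf p) - fderiv ℂ Vf p (Wf p)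

/-- `∇₀₀′ = ∂/∂y`. -/
def nab00 : V4 → V4 := fun _ => eY

/-- `∇₁₀′ = −∂/∂x`. -/
def nab10 : V4 → V4 := fun _ => -eX

/-- `∇₀₁′ = ∂/∂w − (∂Θ₁/∂y)·∂/∂y − (∂Θ₀/∂y)·∂/∂x`. -/
def nab01 (Θ0 Θ1 : V4 → ℂ) : V4 → V4 := fun p =>
  eW - pd eY Θ1 p • eY - pd eY Θ0 p • eX

/-- `∇₁₁′ = ∂/∂z + (∂Θ₁/∂x)·∂/∂y + (∂Θ₀/∂x)·∂/∂x`. -/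
def nab11 (Θ0 Θ1 : V4 → ℂ) : V4 → V4 := fun p =>
  eZ + pd eX Θ1 p • eY + pd eX Θ0 p • eX

/-!
The fields `∇₀₁′` and `∇₁₁′` are the constant fields `∂/∂w`, `∂/∂z` corrected by `∂/∂x`- and
`∂/∂y`-components that are first partials of `Θ₀` and `Θ₁`. Their bracket therefore has no
`w`, `z`-components, and its `x`- resp. `y`-component is a sum of second partials of `Θ₀`
resp. `Θ₁`; once mixed partials are symmetrised, that sum is exactly `E₀` resp. `E₁`.
-/

section PartialDerivatives

theorem pd_add (v w : V4) (f : V4 → ℂ) (p : V4) : pd (v + w) f p = pd v f p + pd w f p :=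
  map_add _ v w

theorem pd_sub (v w : V4) (f : V4 → ℂ) (p : V4) : pd (v - w) f p = pd v f p - pd w f p :=
  map_sub _ v w

theorem pd_smul (c : ℂ) (v : V4) (f : V4 → ℂ) (p : V4) : pd (c • v) f p = c * pd v f p :=
  map_smul _ c v

variable {f : V4 → ℂ} {p : V4}

theorem ContDiffAt.differentiableAt_pd (hf : ContDiffAt ℂ 2 f p) (v : V4) :
    DifferentiableAt ℂ (pd v f) p :=
  ((hf.fderiv_right (m := 1) le_rfl).differentiableAt one_ne_zero).clm_apply
    (differentiableAt_const v)

theorem pd_pd_eq_fderiv_fderiv (hf : DifferentiableAt ℂ (fderiv ℂ f) p) (v w : V4) :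
    pd v (pd w f) p = fderiv ℂ (fderiv ℂ f) p v w := by
  change fderiv ℂ (fun q => fderiv ℂ f q w) p v = _
  simp [fderiv_clm_apply hf (differentiableAt_const w)]

theorem pd_pd_comm (hf : ContDiffAt ℂ 2 f p) (v w : V4) :
    pd v (pd w f) p = pd w (pd v f) p := by
  have hdf : DifferentiableAt ℂ (fderiv ℂ f) p :=
    (hf.fderiv_right (m := 1) le_rfl).differentiableAt one_ne_zero
  rw [pd_pd_eq_fderiv_fderiv hdf, pd_pd_eq_fderiv_fderiv hdf]
  exact hf.isSymmSndFDerivAt minSmoothness_of_isRCLikeNormedField.le v w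

end PartialDerivatives

section Tetrad

variable {Θ0 Θ1 : V4 → ℂ} {p : V4}

theorem fderiv_nab01_apply (h0 : DifferentiableAt ℂ (pd eY Θ0) p)
    (h1 : DifferentiableAt ℂ (pd eY Θ1) p) (v : V4) :
    fderiv ℂ (nab01 Θ0 Θ1) p v = -(pd v (pd eY Θ1) p • eY) - pd v (pd eY Θ0) p • eX := by
  have h : HasFDerivAt (nab01 Θ0 Θ1)
      ((0 : V4 →L[ℂ] V4) - (fderiv ℂ (pd eY Θ1) p).smulRight eY
        - (fderiv ℂ (pd eY Θ0) p).smulRight eX) p :=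
    ((hasFDerivAt_const eW p).sub (h1.hasFDerivAt.smul_const eY)).sub
      (h0.hasFDerivAt.smul_const eX)
  simp [h.fderiv, pd]

theorem fderiv_nab11_apply (h0 : DifferentiableAt ℂ (pd eX Θ0) p)
    (h1 : DifferentiableAt ℂ (pd eX Θ1) p) (v : V4) :
    fderiv ℂ (nab11 Θ0 Θ1) p v = pd v (pd eX Θ1) p • eY + pd v (pd eX Θ0) p • eX := by
  have h : HasFDerivAt (nab11 Θ0 Θ1)
      ((0 : V4 →L[ℂ] V4) + (fderiv ℂ (pd eX Θ1) p).smulRight eY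
        + (fderiv ℂ (pd eX Θ0) p).smulRight eX) p :=
    ((hasFDerivAt_const eZ p).add (h1.hasFDerivAt.smul_const eY)).add
      (h0.hasFDerivAt.smul_const eX)
  simp [h.fderiv, pd]

theorem pd_nab01_add_pd_nab11 {C : V4 → ℂ} (hC : ContDiffAt ℂ 2 C p) :
    pd (nab01 Θ0 Θ1 p) (pd eX C) p + pd (nab11 Θ0 Θ1 p) (pd eY C) p = hhE Θ0 Θ1 C p := by
  simp only [nab01, nab11, pd_add, pd_sub, pd_smul]
  rw [pd_pd_comm hC eW eX, pd_pd_comm hC eZ eY, pd_pd_comm hC eY eX, hhE]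
  ring

theorem bracket_nab01_nab11 (h0 : ContDiffAt ℂ 2 Θ0 p) (h1 : ContDiffAt ℂ 2 Θ1 p) :
    bracket (nab01 Θ0 Θ1) (nab11 Θ0 Θ1) p = hhE Θ0 Θ1 Θ1 p • eY + hhE Θ0 Θ1 Θ0 p • eX := by
  rw [bracket, fderiv_nab11_apply (h0.differentiableAt_pd eX) (h1.differentiableAt_pd eX),
    fderiv_nab01_apply (h0.differentiableAt_pd eY) (h1.differentiableAt_pd eY),
    ← pd_nab01_add_pd_nab11 h0, ← pd_nab01_add_pd_nab11 h1]
  module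

end Tetrad

theorem smul_eY_add_smul_eX_eq_zero_iff (a b : ℂ) : a • eY + b • eX = 0 ↔ b = 0 ∧ a = 0 := by
  simp [eX, eY, Prod.ext_iff]

theorem bracket_eq3_eq_E_general
    (U : Set V4) (Θ0 Θ1 : V4 → ℂ)
    (hΘ0 : ∀ p ∈ U, AnalyticAt ℂ Θ0 p) (hΘ1 : ∀ p ∈ U, AnalyticAt ℂ Θ1 p) :
    (∀ p ∈ U,
      bracket (nab01 Θ0 Θ1) (nab11 Θ0 Θ1) p
        = hhE Θ0 Θ1 Θ1 p • eY + hhE Θ0 Θ1 Θ0 p • eX) ∧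
    ((∀ p ∈ U, bracket (nab01 Θ0 Θ1) (nab11 Θ0 Θ1) p = 0) ↔
      (∀ p ∈ U, hhE Θ0 Θ1 Θ0 p = 0 ∧ hhE Θ0 Θ1 Θ1 p = 0)) := by
  have key : ∀ p ∈ U, bracket (nab01 Θ0 Θ1) (nab11 Θ0 Θ1) p
      = hhE Θ0 Θ1 Θ1 p • eY + hhE Θ0 Θ1 Θ0 p • eX := fun p hp =>
    bracket_nab01_nab11 (hΘ0 p hp).contDiffAt (hΘ1 p hp).contDiffAt
  refine ⟨key, forall₂_congr fun p hp => ?_⟩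
  rw [key p hp, smul_eY_add_smul_eX_eq_zero_iff]

/-- for arbitrary holomorphic `Θ₀, Θ₁` on an open `U ⊆ ℂ⁴`, the exact
identity `[∇₀₁′, ∇₁₁′] = E₁·∂/∂y + E₀·∂/∂x` holds on `U`; in particular
`[∇₀₁′, ∇₁₁′] = 0` on `U` iff `(Θ₀, Θ₁)` satisfies the hyper-Hermitian equation. -/
theorem bracket_eq3_eq_E
    (U : Set V4) (hU : IsOpen U) (Θ0 Θ1 : V4 → ℂ)
    (hΘ0 : ∀ p ∈ U, AnalyticAt ℂ Θ0 p) (hΘ1 : ∀ p ∈ U, AnalyticAt ℂ Θ1 p) :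
    (∀ p ∈ U,
      bracket (nab01 Θ0 Θ1) (nab11 Θ0 Θ1) p
        = hhE Θ0 Θ1 Θ1 p • eY + hhE Θ0 Θ1 Θ0 p • eX) ∧
    ((∀ p ∈ U, bracket (nab01 Θ0 Θ1) (nab11 Θ0 Θ1) p = 0) ↔
      (∀ p ∈ U, hhE Θ0 Θ1 Θ0 p = 0 ∧ hhE Θ0 Θ1 Θ1 p = 0)) :=
  bracket_eq3_eq_E_general U Θ0 Θ1 hΘ0 hΘ1
end
end

section
/- Let Θ : U → ℂ be holomorphic on an open set U ⊆ ℂ⁴ and set Θ₀ := −∂Θ/∂y and Θ₁ := ∂Θ/∂x. Then the exact identities E₀ = −∂(P(Θ))/∂y and E₁ = ∂(P(Θ))/∂x hold on U. -/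
noncomputable section

/-- The second Plebanski expression
`P(Θ) := ∂²Θ/∂x∂w + ∂²Θ/∂y∂z + (∂²Θ/∂x²)(∂²Θ/∂y²) − (∂²Θ/∂x∂y)²`. -/
def pleb (Θ : V4 → ℂ) : V4 → ℂ := fun p =>
  pd eX (pd eW Θ) p + pd eY (pd eZ Θ) p
    + pd eX (pd eX Θ) p * pd eY (pd eY Θ) p
    - (pd eX (pd eY Θ) p) ^ 2

/-! For the gradient pair `Θ₀ = -∂_yΘ`, `Θ₁ = ∂_xΘ` the coefficients of `E_C` are second partials
of `Θ`, and `E_C` is the linearisation `plebLin Θ` of the Plebanski operator at `Θ`, applied to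
`Θ_C`. Because partials of a holomorphic function commute, differentiating `P(Θ)` along `v` gives
that same linearisation applied to `∂_vΘ`; taking `v = y` (with the sign of `Θ₀`) and `v = x`
gives the two identities. -/

def plebLin (Θ φ : V4 → ℂ) : V4 → ℂ := fun p =>
  pd eX (pd eW φ) p + pd eY (pd eZ φ) p
    + pd eX (pd eX φ) p * pd eY (pd eY Θ) p + pd eX (pd eX Θ) p * pd eY (pd eY φ) p
    - 2 * pd eX (pd eY Θ) p * pd eX (pd eY φ) p

section pd

variable {f g : V4 → ℂ} {p : V4}

theorem AnalyticAt.pd (v : V4) (hf : AnalyticAt ℂ f p) : AnalyticAt ℂ (pd v f) p :=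
  ((ContinuousLinearMap.apply ℂ ℂ v).analyticAt _).comp hf.fderiv

theorem pd_fun_neg (v : V4) (f : V4 → ℂ) : pd v (fun q => -f q) = fun p => -pd v f p := by
  funext p
  simp only [pd, fderiv_fun_neg, neg_apply]

theorem pd_fun_add (v : V4) (hf : DifferentiableAt ℂ f p) (hg : DifferentiableAt ℂ g p) :
    pd v (fun q => f q + g q) p = pd v f p + pd v g p := by
  simp only [pd, fderiv_fun_add hf hg, add_apply]

theorem pd_fun_sub (v : V4) (hf : DifferentiableAt ℂ f p) (hg : DifferentiableAt ℂ g p) :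
    pd v (fun q => f q - g q) p = pd v f p - pd v g p := by
  simp only [pd, fderiv_fun_sub hf hg, sub_apply]

theorem pd_fun_mul (v : V4) (hf : DifferentiableAt ℂ f p) (hg : DifferentiableAt ℂ g p) :
    pd v (fun q => f q * g q) p = pd v f p * g p + f p * pd v g p := by
  simp only [pd, fderiv_fun_mul hf hg, add_apply, smul_apply, smul_eq_mul]
  ring

theorem pd_fun_sq (v : V4) (hf : DifferentiableAt ℂ f p) :
    pd v (fun q => f q ^ 2) p = 2 * f p * pd v f p := by
  simp only [pow_two, pd_fun_mul v hf hf]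
  ring

theorem pd_comm_of_analyticAt (u v : V4) (hf : AnalyticAt ℂ f p) :
    pd u (pd v f) p = pd v (pd u f) p := by
  have hsymm : IsSymmSndFDerivAt ℂ f p :=
    (hf.contDiffAt (n := 2)).isSymmSndFDerivAt (by norm_num)
  have pd_pd_eq : ∀ a b : V4, pd a (pd b f) p = fderiv ℂ (fderiv ℂ f) p a b := fun a b => by
    change fderiv ℂ (fun q => fderiv ℂ f q b) p a = _
    rw [fderiv_clm_apply hf.fderiv.differentiableAt (differentiableAt_const b)]
    simp
  rw [pd_pd_eq, pd_pd_eq, hsymm]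

theorem pd_pd_pd_comm_of_analyticAt (u a b : V4) (hf : AnalyticAt ℂ f p) :
    pd u (pd a (pd b f)) p = pd a (pd b (pd u f)) p := by
  rw [pd_comm_of_analyticAt u a (hf.pd b)]
  simp only [pd]
  congr 1
  refine Filter.EventuallyEq.fderiv_eq ?_
  filter_upwards [hf.eventually_analyticAt] with q hq
  exact pd_comm_of_analyticAt u b hq

end pd

theorem pd_pleb {Θ : V4 → ℂ} {p : V4} (v : V4) (hΘ : AnalyticAt ℂ Θ p) :
    pd v (pleb Θ) p = plebLin Θ (pd v Θ) p := by
  have hd : ∀ a b : V4, DifferentiableAt ℂ (pd a (pd b Θ)) p :=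
    fun a b => ((hΘ.pd b).pd a).differentiableAt
  have hpleb : pd v (pleb Θ) p = pd v (pd eX (pd eW Θ)) p + pd v (pd eY (pd eZ Θ)) p
      + (pd v (pd eX (pd eX Θ)) p * pd eY (pd eY Θ) p
        + pd eX (pd eX Θ) p * pd v (pd eY (pd eY Θ)) p)
      - 2 * pd eX (pd eY Θ) p * pd v (pd eX (pd eY Θ)) p := by
    unfold pleb
    rw [pd_fun_sub v (((hd _ _).fun_add (hd _ _)).fun_add ((hd _ _).fun_mul (hd _ _)))
        ((hd _ _).fun_pow 2), pd_fun_add v ((hd _ _).fun_add (hd _ _)) ((hd _ _).fun_mul (hd _ _)),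
      pd_fun_add v (hd _ _) (hd _ _), pd_fun_mul v (hd _ _) (hd _ _), pd_fun_sq v (hd _ _)]
  rw [hpleb, plebLin]
  simp only [pd_pd_pd_comm_of_analyticAt v _ _ hΘ]
  ring

theorem plebLin_fun_neg (Θ φ : V4 → ℂ) (p : V4) :
    plebLin Θ (fun q => -φ q) p = -plebLin Θ φ p := by
  simp only [plebLin, pd_fun_neg]
  ring

theorem hhE_gradient_pair {Θ : V4 → ℂ} {p : V4} (ΘC : V4 → ℂ) (hΘ : AnalyticAt ℂ Θ p) :
    hhE (fun q => -pd eY Θ q) (pd eX Θ) ΘC p = plebLin Θ ΘC p := by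
  simp only [hhE, plebLin, pd_fun_neg, pd_comm_of_analyticAt eY eX hΘ]
  ring

theorem hhE_of_gradient_pair_eq_deriv_pleb_general
    (U : Set V4) (Θ : V4 → ℂ)
    (hΘ : ∀ p ∈ U, AnalyticAt ℂ Θ p) :
    ∀ p ∈ U,
      hhE (fun q => -(pd eY Θ q)) (pd eX Θ) (fun q => -(pd eY Θ q)) p
          = -(pd eY (pleb Θ) p) ∧
      hhE (fun q => -(pd eY Θ q)) (pd eX Θ) (pd eX Θ) p
          = pd eX (pleb Θ) p := by
  intro p hp
  have hΘp := hΘ p hp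
  rw [hhE_gradient_pair _ hΘp, hhE_gradient_pair _ hΘp, plebLin_fun_neg,
    pd_pleb eY hΘp, pd_pleb eX hΘp]
  exact ⟨rfl, rfl⟩

/-- if `Θ₀ := −∂Θ/∂y` and `Θ₁ := ∂Θ/∂x` for a holomorphic `Θ`, then the
exact identities `E₀ = −∂(P(Θ))/∂y` and `E₁ = ∂(P(Θ))/∂x` hold on `U`. -/
theorem hhE_of_gradient_pair_eq_deriv_pleb
    (U : Set V4) (hU : IsOpen U) (Θ : V4 → ℂ)
    (hΘ : ∀ p ∈ U, AnalyticAt ℂ Θ p) :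
    ∀ p ∈ U,
      hhE (fun q => -(pd eY Θ q)) (pd eX Θ) (fun q => -(pd eY Θ q)) p
          = -(pd eY (pleb Θ) p) ∧
      hhE (fun q => -(pd eY Θ q)) (pd eX Θ) (pd eX Θ) p
          = pd eX (pleb Θ) p :=
  hhE_of_gradient_pair_eq_deriv_pleb_general U Θ hΘ
end
end
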